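/- Let q ≥ 2, t ≥ 1, R ≥ 1 and s ≥ 0 be integers and let δ be a real number with 0 < δ ≤ 1. Let S₁, …, S_s be pairwise disjoint subsets of [R] with |S_i| ≤ t for each i, and let c₁, …, c_s : [R] → [q] be arbitrary strings. Let I ⊆ [q]^R satisfy |I| ≥ δ · q^R and suppose that for every b ∈ I and every i ∈ [s] there exists r ∈ S_i with b(r) = c_i(r). Then s ≤ (q/(q − 1))^t · ln(1/δ). -/

import Mathlib

/-!
A uniformly random string satisfies the `i`-th constraint only if it hits `c i` somewhere on
`S i`, which has probability `1 - ((q-1)/q)^|S i| ≤ 1 - p` with `p = ((q-1)/q)^t`. Constraints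
on disjoint blocks are independent, so at most `(1 - p)^s q^R` strings satisfy all of them.
Hence `δ ≤ (1 - p)^s ≤ exp (-s p)`, i.e. `s ≤ p⁻¹ log (1/δ)`.
-/

open Finset Function

theorem dependsOn_exists_eq {ι β : Type*} (S : Finset ι) (c : ι → β) :
    DependsOn (fun b : ι → β => ∃ r ∈ S, b r = c r) S :=
  fun _ _ h => propext <| exists_congr fun r => and_congr_right fun hr => by rw [h r hr]

section Counting

variable {ι β : Type*} [Fintype ι] [DecidableEq ι] [Fintype β]

theorem card_filter_and_mul_card_eq (U : Finset ι) {P Q : (ι → β) → Prop}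
    [DecidablePred P] [DecidablePred Q] (hP : DependsOn P U) (hQ : DependsOn Q (↑U)ᶜ) :
    #{b | P b ∧ Q b} * Fintype.card (ι → β) = #{b | P b} * #{b | Q b} := by
  -- Exchanging the `U`-coordinates of two strings is an involution on pairs; it carries
  -- `{P ∧ Q} × univ` onto `{P} × {Q}`.
  have agree_left (x y : ι → β) : ∀ i ∈ (U : Set ι), U.piecewise x y i = x i :=
    fun i hi => U.piecewise_eq_of_mem _ _ hi
  have agree_right (x y : ι → β) : ∀ i ∈ (U : Set ι)ᶜ, U.piecewise y x i = x i :=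
    fun i hi => U.piecewise_eq_of_notMem _ _ hi
  have swap_involutive (x y : ι → β) : U.piecewise (U.piecewise x y) (U.piecewise y x) = x := by
    ext i; by_cases hi : i ∈ U <;> simp [hi]
  rw [← card_univ, ← card_product, ← card_product]
  refine card_nbij' (fun x => (U.piecewise x.1 x.2, U.piecewise x.2 x.1))
    (fun x => (U.piecewise x.1 x.2, U.piecewise x.2 x.1)) ?_ ?_ ?_ ?_
  · rintro ⟨x, y⟩ hxy
    simp only [mem_coe, mem_product, mem_filter, mem_univ, true_and, and_true] at hxy ⊢
    exact ⟨hP (agree_left x y) ▸ hxy.1, hQ (agree_right x y) ▸ hxy.2⟩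
  · rintro ⟨x, y⟩ hxy
    simp only [mem_coe, mem_product, mem_filter, mem_univ, true_and, and_true] at hxy ⊢
    exact ⟨(hP (agree_left x y)).symm ▸ hxy.1, (hQ (agree_right y x)).symm ▸ hxy.2⟩
  all_goals rintro ⟨x, y⟩ -; simp only [swap_involutive]

theorem card_filter_forall_ne [DecidableEq β] (S : Finset ι) (c : ι → β) :
    #{b : ι → β | ∀ r ∈ S, b r ≠ c r} = (Fintype.card β - 1) ^ #S * Fintype.card β ^ #Sᶜ := by
  have : ({b : ι → β | ∀ r ∈ S, b r ≠ c r} : Finset _) =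
      Fintype.piFinset fun r => if r ∈ S then {c r}ᶜ else univ := by
    ext b; simp only [mem_filter, mem_univ, true_and, Fintype.mem_piFinset]
    refine forall_congr' fun r => ?_
    by_cases hr : r ∈ S <;> simp [hr]
  rw [this, Fintype.card_piFinset]
  simp only [apply_ite card, prod_ite, prod_const, ← compl_filter, filter_univ_mem, card_compl,
    card_singleton, card_univ]

theorem card_filter_exists_eq_le [DecidableEq β] [Nonempty β] {t : ℕ} (S : Finset ι)
    (hS : #S ≤ t) (c : ι → β) :
    (#{b : ι → β | ∃ r ∈ S, b r = c r} : ℝ) ≤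
      (1 - ((Fintype.card β - 1) / Fintype.card β : ℝ) ^ t) * Fintype.card β ^ Fintype.card ι := by
  have hsplit := card_filter_add_card_filter_not (s := univ) (fun b : ι → β => ∃ r ∈ S, b r = c r)
  simp only [not_exists, not_and, ← ne_eq] at hsplit
  rw [card_filter_forall_ne, card_univ, Fintype.card_fun] at hsplit
  set q := Fintype.card β
  have hq1 : 1 ≤ q := Fintype.card_pos
  have hq : (1 : ℝ) ≤ q := by exact_mod_cast hq1
  have hsplit' : (#{b : ι → β | ∃ r ∈ S, b r = c r} : ℝ) + ((q - 1) / q : ℝ) ^ #S * q ^ Fintype.card ι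
      = q ^ Fintype.card ι := by
    rw [div_pow, ← card_add_card_compl S, pow_add]
    have := congrArg (Nat.cast (R := ℝ)) hsplit
    push_cast [Nat.cast_sub hq1, ← card_add_card_compl S, pow_add] at this
    field_simp
    linarith
  have hmono : ((q - 1) / q : ℝ) ^ t ≤ ((q - 1) / q : ℝ) ^ #S :=
    pow_le_pow_of_le_one (div_nonneg (by linarith) (by linarith))
      (div_le_one_of_le₀ (by linarith) (by linarith)) hS
  nlinarith [pow_pos (by linarith : (0 : ℝ) < q) (Fintype.card ι)]

theorem card_filter_forall_le_pow [Nonempty β] {s : ℕ} {S : Fin s → Finset ι}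
    (hS : Pairwise (Disjoint on S)) {P : Fin s → (ι → β) → Prop} [∀ i, DecidablePred (P i)]
    (hP : ∀ i, DependsOn (P i) (S i)) {x : ℝ}
    (hx : ∀ i, (#{b | P i b} : ℝ) ≤ x * Fintype.card (ι → β)) :
    (#{b | ∀ i, P i b} : ℝ) ≤ x ^ s * Fintype.card (ι → β) := by
  induction s with
  | zero => simp
  | succ n ih =>
    have hN : (0 : ℝ) < Fintype.card (ι → β) := by exact_mod_cast Fintype.card_pos
    have hx0 : 0 ≤ x := nonneg_of_mul_nonneg_left ((Nat.cast_nonneg _).trans (hx 0)) hN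
    have htail_dependsOn : DependsOn (fun b => ∀ j : Fin n, P j.succ b) (↑(S 0))ᶜ :=
      fun b b' h => forall_congr fun j => (hP j.succ).mono
        (Set.subset_compl_iff_disjoint_right.2 (disjoint_coe.2 (hS (Fin.succ_ne_zero j)))) h
    have hindep := card_filter_and_mul_card_eq (S 0) (hP 0) htail_dependsOn
    have htail := ih (fun i j hij => hS (Fin.succ_injective n |>.ne hij)) (fun j => hP j.succ)
      (fun j => hx j.succ)
    simp only [Fin.forall_fin_succ]
    rw [← mul_le_mul_iff_left₀ hN]
    calc (#{b | P 0 b ∧ ∀ j : Fin n, P j.succ b} : ℝ) * Fintype.card (ι → β)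
        = #{b | P 0 b} * #{b | ∀ j : Fin n, P j.succ b} := by exact_mod_cast hindep
      _ ≤ (x * Fintype.card (ι → β)) * (x ^ n * Fintype.card (ι → β)) :=
        mul_le_mul (hx 0) htail (Nat.cast_nonneg _) (by positivity)
      _ = x ^ (n + 1) * Fintype.card (ι → β) * Fintype.card (ι → β) := by ring

end Counting

theorem mul_le_log_inv_of_le_one_sub_pow {δ p : ℝ} {s : ℕ} (hδ : 0 < δ) (hp : p ≤ 1)
    (h : δ ≤ (1 - p) ^ s) : s * p ≤ Real.log (1 / δ) := by
  have hexp : δ ≤ Real.exp (-(s * p)) := calc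
    δ ≤ (1 - p) ^ s := h
    _ ≤ Real.exp (-p) ^ s := pow_le_pow_left₀ (by linarith) (Real.one_sub_le_exp_neg p) s
    _ = Real.exp (-(s * p)) := by rw [← Real.exp_nat_mul]; ring_nf
  rw [one_div, Real.log_inv]
  linarith [(Real.log_le_iff_le_exp hδ).2 hexp]

theorem disjointBlocks_few_general (q t R s : ℕ) (hq : 2 ≤ q)
    (δ : ℝ) (hδ0 : 0 < δ)
    (S : Fin s → Finset (Fin R))
    (hdisj : ∀ i j : Fin s, i ≠ j → Disjoint (S i) (S j))
    (hsize : ∀ i, (S i).card ≤ t)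
    (c : Fin s → Fin R → Fin q)
    (I : Finset (Fin R → Fin q))
    (hIcard : δ * (q : ℝ) ^ R ≤ (I.card : ℝ))
    (hI : ∀ b ∈ I, ∀ i : Fin s, ∃ r ∈ S i, b r = c i r) :
    (s : ℝ) ≤ ((q : ℝ) / ((q : ℝ) - 1)) ^ t * Real.log (1 / δ) := by
  have hq' : (2 : ℝ) ≤ q := by exact_mod_cast hq
  have : NeZero q := ⟨by omega⟩
  set p : ℝ := (((q : ℝ) - 1) / q) ^ t
  have hp0 : 0 < p := pow_pos (div_pos (by linarith) (by linarith)) t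
  have hp1 : p ≤ 1 := pow_le_one₀ (div_nonneg (by linarith) (by linarith))
    (div_le_one_of_le₀ (by linarith) (by linarith))
  have hcount : (#I : ℝ) ≤ (1 - p) ^ s * q ^ R := calc
    (#I : ℝ) ≤ #{b : Fin R → Fin q | ∀ i, ∃ r ∈ S i, b r = c i r} := by
      exact_mod_cast card_le_card fun b hb => mem_filter.2 ⟨mem_univ b, hI b hb⟩
    _ ≤ (1 - p) ^ s * q ^ R := by
      have hblock (i : Fin s) :
          (#{b : Fin R → Fin q | ∃ r ∈ S i, b r = c i r} : ℝ) ≤ (1 - p) * q ^ R := by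
        -- `convert`: over `Fin R` the filter picks up the instance `Nat.decidableExistsFin`
        convert card_filter_exists_eq_le (S i) (hsize i) (c i) using 4 <;> simp
      simpa using card_filter_forall_le_pow (fun i j => hdisj i j)
        (fun i => dependsOn_exists_eq (S i) (c i)) (by simpa using hblock)
  have hδ : δ ≤ (1 - p) ^ s := le_of_mul_le_mul_right (hIcard.trans hcount) (by positivity)
  rw [← inv_div, inv_pow, inv_mul_eq_div, le_div_iff₀ hp0]
  exact mul_le_log_inv_of_le_one_sub_pow hδ0 hp1 hδ

/-- **Claim 5.3.** Let `S₁,…,S_s` be pairwise disjoint subsets of `[R]`, each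
of size at most `t`, and `c₁,…,c_s` arbitrary strings. If `I ⊆ [q]^R` has
`|I| ≥ δ·q^R` and every `b ∈ I` agrees with `c_i` somewhere on `S_i` for each
`i`, then `s ≤ (q/(q−1))^t · ln(1/δ)`. -/
theorem disjointBlocks_few (q t R s : ℕ) (hq : 2 ≤ q) (ht : 1 ≤ t)
    (hR : 1 ≤ R) (δ : ℝ) (hδ0 : 0 < δ) (hδ1 : δ ≤ 1)
    (S : Fin s → Finset (Fin R))
    (hdisj : ∀ i j : Fin s, i ≠ j → Disjoint (S i) (S j))
    (hsize : ∀ i, (S i).card ≤ t)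
    (c : Fin s → Fin R → Fin q)
    (I : Finset (Fin R → Fin q))
    (hIcard : δ * (q : ℝ) ^ R ≤ (I.card : ℝ))
    (hI : ∀ b ∈ I, ∀ i : Fin s, ∃ r ∈ S i, b r = c i r) :
    (s : ℝ) ≤ ((q : ℝ) / ((q : ℝ) - 1)) ^ t * Real.log (1 / δ) :=
  disjointBlocks_few_general q t R s hq δ hδ0 S hdisj hsize c I hIcard hI
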